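/- arXiv:1502.05946 — 6 statements merged into one kernel-verified Lean document; each statement's English description precedes it below -/
import Mathlib

section
/- Let 0 ≤ σ₁ ≤ σ₂ ≤ ... ≤ σ_n be real numbers and let ε ∈ {±1}ⁿ. If the σⱼ are strictly increasing and positive, then the sign of the Vandermonde determinant Δ(ε₁σ₁, ..., ε_nσ_n) = ∏_{k>j}(ε_kσ_k − ε_jσ_j) equals ∏_{k even} ε_k. -/
/-!
Since `0 < σ j < σ k` for `j < k`, we have `|ε j * σ j| < σ k`, so the factor
`ε k * σ k - ε j * σ j` has the sign of `ε k`. The sign of the product is therefore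
`∏ k, ε k ^ k` (with `k` the 0-based index), and `ε k ^ k` is `ε k` for odd `k` and `1` otherwise.
-/

open Finset

theorem Real.sign_eq_coe_sign (r : ℝ) : Real.sign r = ((SignType.sign r : SignType) : ℝ) := by
  rcases lt_trichotomy r 0 with hr | rfl | hr
  · simp [Real.sign_of_neg hr, hr]
  · simp [Real.sign_zero]
  · simp [Real.sign_of_pos hr, hr]

theorem Real.sign_prod {ι : Type*} (s : Finset ι) (f : ι → ℝ) :
    Real.sign (∏ i ∈ s, f i) = ∏ i ∈ s, Real.sign (f i) := by
  simp only [Real.sign_eq_coe_sign]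
  exact map_prod (SignType.castHom.comp signHom) f s

theorem Real.sign_mul_sub_of_abs_lt {ε a b : ℝ} (hε : ε = 1 ∨ ε = -1) (hb : |b| < a) :
    Real.sign (ε * a - b) = ε := by
  obtain ⟨hb₁, hb₂⟩ := abs_lt.mp hb
  rcases hε with rfl | rfl
  · exact Real.sign_of_pos (by linarith)
  · exact Real.sign_of_neg (by linarith)

theorem pow_eq_ite_odd_of_sq_eq_one {M : Type*} [Monoid M] {x : M} (hx : x ^ 2 = 1) (m : ℕ) :
    x ^ m = if Odd m then x else 1 := by
  rcases Nat.even_or_odd' m with ⟨r, rfl | rfl⟩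
  · simp [pow_mul, hx]
  · simp [pow_succ, pow_mul, hx]

theorem Fin.prod_pow_val_of_sq_eq_one {M : Type*} [CommMonoid M] {n : ℕ} (x : Fin n → M)
    (hx : ∀ k, x k ^ 2 = 1) :
    ∏ k, x k ^ (k : ℕ) = ∏ k ∈ univ.filter (fun k : Fin n => Even ((k : ℕ) + 1)), x k := by
  rw [prod_filter]
  refine prod_congr rfl fun k _ => ?_
  simp only [pow_eq_ite_odd_of_sq_eq_one (hx k), Nat.even_add_one, Nat.not_even_iff_odd]

theorem Fin.card_filter_lt {n : ℕ} (k : Fin n) : #(univ.filter (· < k)) = k := by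
  rw [filter_gt_eq_Iio, Fin.card_Iio]

theorem vandermonde_sign (n : ℕ) (σ ε : Fin n → ℝ)
    (hσ : StrictMono σ) (hpos : ∀ i, 0 < σ i)
    (hε : ∀ i, ε i = 1 ∨ ε i = -1) :
    Real.sign (∏ k : Fin n, ∏ j ∈ Finset.univ.filter (· < k), (ε k * σ k - ε j * σ j))
      = ∏ k ∈ Finset.univ.filter (fun k : Fin n => Even ((k : ℕ) + 1)), ε k := by
  have hε_abs : ∀ i, |ε i| = 1 := fun i => (abs_eq zero_le_one).mpr (hε i)
  have hfactor : ∀ k j, j < k → Real.sign (ε k * σ k - ε j * σ j) = ε k := fun k j hjk =>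
    Real.sign_mul_sub_of_abs_lt (hε k) <| by
      rw [abs_mul, hε_abs, one_mul, abs_of_pos (hpos j)]
      exact hσ hjk
  calc Real.sign (∏ k, ∏ j ∈ univ.filter (· < k), (ε k * σ k - ε j * σ j))
      = ∏ k, ∏ j ∈ univ.filter (· < k), ε k := by
        simp only [Real.sign_prod]
        exact prod_congr rfl fun k _ => prod_congr rfl fun j hj => hfactor k j (mem_filter.mp hj).2
    _ = ∏ k, ε k ^ (k : ℕ) := by simp only [prod_const, Fin.card_filter_lt]
    _ = _ := Fin.prod_pow_val_of_sq_eq_one ε fun k => by rw [← sq_abs, hε_abs, one_pow]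
end

section
/- For real numbers 0 ≤ σ₁ ≤ ... ≤ σ_n, the symmetrized sum D(σ₁,...,σ_n) = ∑_{ε ∈ {±1}ⁿ} (∏_{k even} ε_k) · Δ(ε₁σ₁,...,ε_nσ_n) equals 2ⁿ · Δ(x₁²,...,x_{m̂}²) · (y₁⋯y_m) · Δ(y₁²,...,y_m²), where n = 2m+μ with μ ∈ {0,1}, m̂ = m+μ, xⱼ = σ_{2j−1} (j = 1,...,m̂) and yⱼ = σ_{2j} (j = 1,...,m). -/
open Finset

/-- The Vandermonde product `∏_{k>j} (ξ k - ξ j)`. -/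
def Vdm {n : ℕ} (ξ : Fin n → ℝ) : ℝ :=
  ∏ k : Fin n, ∏ j ∈ Finset.univ.filter (· < k), (ξ k - ξ j)

/-- Sign of a boolean, `±1`. -/
def sgn (b : Bool) : ℝ := if b then 1 else -1

/-- The symmetrized sum `D(σ) = ∑_{ε ∈ {±1}ⁿ} θ₀(ε) Δ(ε₁σ₁,…,ε_nσ_n)`,
where `θ₀(ε)` is the product of the signs at even (one-based) locations. -/
def Dsym (n : ℕ) (σ : Fin n → ℝ) : ℝ :=
  ∑ ε : Fin n → Bool,
    (∏ k ∈ Finset.univ.filter (fun k : Fin n => Even ((k : ℕ) + 1)), sgn (ε k)) *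
      Vdm (fun i => sgn (ε i) * σ i)

/-!
Expanding the determinant `Δ(ε₁σ₁, …, ε_nσ_n) = det ((εᵢσᵢ)^j)` multilinearly in its rows, the
signed sum over `ε` collapses into a single determinant whose `(i, j)` entry is
`(∑ₑ e^{i+j}) σᵢ^j` with `e = ±1` (0-based indices; the weight `θ₀(ε)` is `∏ εᵢ^i`). This entry
is `2 σᵢ^j` when `i + j` is even and `0` otherwise, so after listing even indices before odd
ones the matrix is block diagonal. The even block is `2 (xₐ²)^b`, a scaled Vandermonde matrix in
the `x²`, and the odd block is `2 yₐ (yₐ²)^b`, a scaled Vandermonde matrix in the `y²`.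
-/

lemma Vdm_eq_det_vandermonde {n : ℕ} (ξ : Fin n → ℝ) : Vdm ξ = (Matrix.vandermonde ξ).det := by
  rw [Matrix.det_vandermonde, Vdm, prod_sigma', prod_sigma']
  exact prod_nbij' (fun p => ⟨p.2, p.1⟩) (fun p => ⟨p.2, p.1⟩) (by simp) (by simp) (by simp)
    (by simp) (by simp)

lemma sgn_pow (b : Bool) (k : ℕ) : sgn b ^ k = if Even k then 1 else sgn b := by
  have hsq : sgn b ^ 2 = 1 := by cases b <;> norm_num [sgn]
  rcases k.even_or_odd' with ⟨r, rfl | rfl⟩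
  · simp [pow_mul, hsq]
  · simp [pow_succ, pow_mul, hsq]

lemma sum_sgn_pow (k : ℕ) : ∑ b : Bool, sgn b ^ k = if Even k then 2 else 0 := by
  simp only [Fintype.sum_bool, sgn_pow]
  split_ifs <;> norm_num [sgn]

lemma Matrix.det_of_sum_smul_rows {ι κ R : Type*} [Fintype ι] [DecidableEq ι] [Fintype κ]
    [CommRing R] (c : ι → κ → R) (v : ι → κ → ι → R) :
    (Matrix.of fun i => ∑ b, c i b • v i b).det =
      ∑ ε : ι → κ, (∏ i, c i (ε i)) * (Matrix.of fun i => v i (ε i)).det := by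
  change Matrix.detRowAlternating (fun i => ∑ b, c i b • v i b) = _
  rw [← AlternatingMap.coe_multilinearMap, MultilinearMap.map_sum]
  refine sum_congr rfl fun ε _ => ?_
  rw [MultilinearMap.map_smul_univ, smul_eq_mul]
  rfl

lemma Dsym_eq_det (n : ℕ) (σ : Fin n → ℝ) :
    Dsym n σ =
      (Matrix.of fun i j : Fin n => (∑ b : Bool, sgn b ^ (i + j : ℕ)) * σ i ^ (j : ℕ)).det := by
  have hrows :
      (Matrix.of fun i j : Fin n => (∑ b : Bool, sgn b ^ (i + j : ℕ)) * σ i ^ (j : ℕ)) =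
        Matrix.of fun i : Fin n =>
          ∑ b : Bool, sgn b ^ (i : ℕ) • fun j : Fin n => (sgn b * σ i) ^ (j : ℕ) := by
    ext i j
    simp only [Matrix.of_apply, Finset.sum_apply, Pi.smul_apply, smul_eq_mul, sum_mul, mul_pow,
      pow_add, mul_assoc]
  rw [hrows, Matrix.det_of_sum_smul_rows, Dsym]
  refine sum_congr rfl fun ε _ => ?_
  rw [Vdm_eq_det_vandermonde, prod_filter]
  congr 1
  refine prod_congr rfl fun k _ => ?_
  simp [sgn_pow, Nat.even_add_one, -Nat.not_even_iff_odd, ite_not]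

lemma det_of_mul_pow {k : ℕ} (c x : Fin k → ℝ) :
    (Matrix.of fun a b : Fin k => c a * x a ^ (b : ℕ)).det = (∏ a, c a) * Vdm x := by
  rw [Vdm_eq_det_vandermonde, ← Matrix.det_mul_column]
  rfl

lemma det_of_mul_pow_two_mul {k : ℕ} (c x : Fin k → ℝ) :
    (Matrix.of fun a b : Fin k => c a * x a ^ (2 * (b : ℕ))).det =
      (∏ a, c a) * Vdm (fun a => x a ^ 2) := by
  simp only [pow_mul, det_of_mul_pow]

lemma det_of_mul_pow_two_mul_add_one {k : ℕ} (c x : Fin k → ℝ) :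
    (Matrix.of fun a b : Fin k => c a * x a ^ (2 * (b : ℕ) + 1)).det =
      (∏ a, c a * x a) * Vdm (fun a => x a ^ 2) := by
  simp only [pow_succ, pow_mul, ← mul_assoc, mul_right_comm _ _ (x _), det_of_mul_pow]

def finInterleave {m μ : ℕ} (hμ : μ ≤ 1) : Fin (m + μ) ⊕ Fin m ≃ Fin (2 * m + μ) where
  toFun := Sum.elim (fun a => ⟨2 * a, by omega⟩) (fun a => ⟨2 * a + 1, by omega⟩)
  invFun i := if h : (i : ℕ) % 2 = 0 then .inl ⟨i / 2, by omega⟩ else .inr ⟨i / 2, by omega⟩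
  left_inv := by rintro (a | a) <;> simp [Nat.mul_add_div]
  right_inv i := by by_cases h : (i : ℕ) % 2 = 0 <;> simp [h, Fin.ext_iff] <;> omega

lemma Matrix.det_eq_det_even_mul_det_odd {R : Type*} [CommRing R] {m μ : ℕ} (hμ : μ ≤ 1)
    (A : Matrix (Fin (2 * m + μ)) (Fin (2 * m + μ)) R)
    (hA : ∀ i j : Fin (2 * m + μ), Odd ((i : ℕ) + j) → A i j = 0) :
    A.det = (Matrix.of fun a b : Fin (m + μ) => A ⟨2 * a, by omega⟩ ⟨2 * b, by omega⟩).det *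
      (Matrix.of fun a b : Fin m => A ⟨2 * a + 1, by omega⟩ ⟨2 * b + 1, by omega⟩).det := by
  rw [← Matrix.det_submatrix_equiv_self (finInterleave hμ), ← Matrix.det_fromBlocks_zero₁₂]
  congr 1
  ext (a | a) (b | b) <;> simp [finInterleave]
  · exact hA _ _ (by simp [parity_simps])
  · exact hA _ _ (by simp [parity_simps])

theorem Dsym_factorization (m μ : ℕ) (hμ : μ = 0 ∨ μ = 1)
    (σ : Fin (2 * m + μ) → ℝ) :
    Dsym (2 * m + μ) σ =
      2 ^ (2 * m + μ) *
        Vdm (fun j : Fin (m + μ) => (σ ⟨2 * (j : ℕ), by omega⟩) ^ 2) *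
        (∏ j : Fin m, σ ⟨2 * (j : ℕ) + 1, by omega⟩) *
        Vdm (fun j : Fin m => (σ ⟨2 * (j : ℕ) + 1, by omega⟩) ^ 2) := by
  rw [Dsym_eq_det, Matrix.det_eq_det_even_mul_det_odd (by omega) _ fun i j hij => by
    rw [Matrix.of_apply, sum_sgn_pow, if_neg (Nat.not_even_iff_odd.mpr hij), zero_mul]]
  simp only [Matrix.of_apply, sum_sgn_pow, parity_simps, even_two, true_or, if_true]
  rw [det_of_mul_pow_two_mul, det_of_mul_pow_two_mul_add_one, prod_mul_distrib]
  simp only [prod_const, card_univ, Fintype.card_fin]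
  rw [show (2 : ℝ) ^ (2 * m + μ) = 2 ^ (m + μ) * 2 ^ m by rw [← pow_add]; congr 1; omega]
  ring
end

section
/- The polynomial D(σ₁,...,σ_n) = ∑_{ε ∈ {±1}ⁿ} (∏_{k even} ε_k) · Δ(ε₁σ₁,...,ε_nσ_n) is divisible (as a polynomial in σ₁,...,σ_n) by σ_j² − σ_{j+2}² for each j with 1 ≤ j ≤ n−2, and by σ₂. -/
/-!
A substitution `σᵢ ↦ ±σᵢ` only reindexes the sum over `ε` and multiplies `D` by the product of
the new signs at even positions, and a permutation of the variables preserving the parity of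
indices reindexes `ε` and permutes the rows of the Vandermonde matrix. Hence `D` changes sign
under `σⱼ ↔ σⱼ₊₂`, so it vanishes on `σⱼ = σⱼ₊₂`, and it is odd in `σ₂`, so it vanishes on
`σ₂ = 0`. Conjugating by `σⱼ₊₂ ↦ -σⱼ₊₂` it also vanishes on `σⱼ = -σⱼ₊₂`. Vanishing on
`σₐ = q` gives divisibility by `σₐ - q`.
-/

open Finset MvPolynomial

/-- The polynomial `D(σ₁,…,σ_n) = ∑_{ε ∈ {±1}ⁿ} θ₀(ε) Δ(ε₁σ₁,…,ε_nσ_n)`,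
viewed as a multivariate polynomial in the variables `σ₁,…,σ_n`. -/
noncomputable def Dpoly (n : ℕ) : MvPolynomial (Fin n) ℝ :=
  ∑ ε : Fin n → Bool,
    C (∏ k ∈ Finset.univ.filter (fun k : Fin n => Even ((k : ℕ) + 1)), sgn (ε k)) *
      ∏ k : Fin n, ∏ j ∈ Finset.univ.filter (· < k),
        (C (sgn (ε k)) * X k - C (sgn (ε j)) * X j)

namespace MvPolynomial

variable {R σ τ : Type*} [CommRing R]

theorem rename_eq_bind₁ (f : σ → τ) (p : MvPolynomial σ R) : rename f p = bind₁ (X ∘ f) p := by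
  rw [← bind₁_rename, bind₁_X_left]
  rfl

theorem X_sub_dvd_sub_bind₁_update [DecidableEq σ] (a : σ) (q p : MvPolynomial σ R) :
    X a - q ∣ p - bind₁ (Function.update X a q) p := by
  induction p using MvPolynomial.induction_on with
  | C r => simp
  | add p p' hp hp' => simpa [add_sub_add_comm] using dvd_add hp hp'
  | mul_X p i hp =>
    have key : p * X i - bind₁ (Function.update X a q) (p * X i)
        = (p - bind₁ (Function.update X a q) p) * X i
          + bind₁ (Function.update X a q) p * (X i - Function.update X a q i) := by
      rw [map_mul, bind₁_X_right]; ring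
    rw [key]
    refine dvd_add (hp.mul_right _) (Dvd.dvd.mul_left ?_ _)
    rcases eq_or_ne i a with rfl | hia
    · simp
    · simp [Function.update_of_ne hia]

theorem X_sub_dvd_of_bind₁_update_eq_zero [DecidableEq σ] {a : σ} {q p : MvPolynomial σ R}
    (h : bind₁ (Function.update X a q) p = 0) : X a - q ∣ p := by
  simpa [h] using X_sub_dvd_sub_bind₁_update a q p

theorem bind₁_eq_zero_of_bind₁_eq_neg [IsDomain R] [CharZero R] {p : MvPolynomial σ R}
    {φ : σ → MvPolynomial σ R} {g : σ → MvPolynomial τ R} (hp : bind₁ φ p = -p)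
    (hg : ∀ i, bind₁ g (φ i) = g i) : bind₁ g p = 0 := by
  have : bind₁ g p = -bind₁ g p := by
    rw [← map_neg, ← hp, bind₁_bind₁]
    simp only [hg]
  exact self_eq_neg.mp this

theorem X_sq_sub_X_sq_dvd_of_bind₁_update_eq_zero [IsDomain R] [CharZero R] [DecidableEq σ]
    {a c : σ} (hac : a ≠ c) {p : MvPolynomial σ R} (h₁ : bind₁ (Function.update X a (X c)) p = 0)
    (h₂ : bind₁ (Function.update X a (-X c)) p = 0) : X a ^ 2 - X c ^ 2 ∣ p := by
  obtain ⟨u, rfl⟩ := X_sub_dvd_of_bind₁_update_eq_zero h₁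
  have hu : bind₁ (Function.update X a (-X c)) u = 0 := by
    have hXc : (-X c - X c : MvPolynomial σ R) ≠ 0 := by
      rw [← neg_add', neg_ne_zero, ← two_mul]
      exact mul_ne_zero two_ne_zero (X_ne_zero c)
    simpa [Function.update_of_ne hac.symm, hXc] using h₂
  have hdvd := X_sub_dvd_of_bind₁_update_eq_zero hu
  rw [sub_neg_eq_add] at hdvd
  calc X a ^ 2 - X c ^ 2 = (X a - X c) * (X a + X c) := by ring
    _ ∣ (X a - X c) * u := mul_dvd_mul_left _ hdvd

end MvPolynomial

lemma sgn_beq (x y : Bool) : sgn (x == y) = sgn x * sgn y := by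
  cases x <;> cases y <;> norm_num [sgn]

lemma sgn_mul_self (b : Bool) : sgn b * sgn b = 1 := by
  cases b <;> norm_num [sgn]

/-- The sign `θ₀(ε)`; position `k : Fin n` is the paper's index `k + 1`. -/
def evenSign {n : ℕ} (ε : Fin n → Bool) : ℝ :=
  ∏ k ∈ univ.filter (fun k : Fin n => Even ((k : ℕ) + 1)), sgn (ε k)

lemma evenSign_beq {n : ℕ} (ε b : Fin n → Bool) :
    evenSign (fun i => ε i == b i) = evenSign ε * evenSign b := by
  simp only [evenSign, sgn_beq, prod_mul_distrib]

lemma evenSign_mul_self {n : ℕ} (b : Fin n → Bool) : evenSign b * evenSign b = 1 := by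
  simp only [evenSign, ← prod_mul_distrib, sgn_mul_self, prod_const_one]

lemma evenSign_update_false {n : ℕ} (c : Fin n) :
    evenSign (Function.update (fun _ => true) c false) = if Even ((c : ℕ) + 1) then -1 else 1 := by
  simp only [evenSign, Function.apply_update (fun _ => sgn)]
  split_ifs with hc
  · rw [prod_update_of_mem (by simpa using hc)]
    simp [sgn]
  · rw [prod_update_of_notMem (by simpa using hc)]
    simp [sgn]

lemma bind₁_Dpoly {n : ℕ} (f : Fin n → MvPolynomial (Fin n) ℝ) :
    bind₁ f (Dpoly n) =
      ∑ ε, C (evenSign ε) * (Matrix.vandermonde fun i => C (sgn (ε i)) * f i).det := by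
  rw [Dpoly, map_sum]
  refine sum_congr rfl fun ε _ => ?_
  rw [map_mul, bind₁_C_right, Matrix.det_vandermonde, map_prod,
    prod_comm' (t' := univ) (s' := fun j => Ioi j) (by simp)]
  simp only [map_prod, map_sub, map_mul, bind₁_C_right, bind₁_X_right, evenSign]

lemma Dpoly_eq_sum_det_vandermonde {n : ℕ} :
    Dpoly n = ∑ ε, C (evenSign ε) * (Matrix.vandermonde fun i => C (sgn (ε i)) * X i).det := by
  simpa using bind₁_Dpoly (X : Fin n → MvPolynomial (Fin n) ℝ)

lemma bind₁_signs_Dpoly {n : ℕ} (b : Fin n → Bool) :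
    bind₁ (fun i => C (sgn (b i)) * X i) (Dpoly n) = C (evenSign b) * Dpoly n := by
  have hinv : Function.Involutive fun (ε : Fin n → Bool) i => ε i == b i := fun ε => by
    funext i
    show ((ε i == b i) == b i) = ε i
    cases ε i <;> cases b i <;> rfl
  rw [bind₁_Dpoly, Dpoly_eq_sum_det_vandermonde, mul_sum]
  refine Fintype.sum_equiv hinv.toPerm _ _ fun ε => ?_
  have hb : C (evenSign b) * C (evenSign b) = (1 : MvPolynomial (Fin n) ℝ) := by
    rw [← map_mul, evenSign_mul_self, map_one]
  simp only [Function.Involutive.coe_toPerm, sgn_beq, evenSign_beq, map_mul, mul_assoc]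
  rw [mul_left_comm (C (evenSign ε)), ← mul_assoc, hb, one_mul]

lemma rename_Dpoly {n : ℕ} (π : Equiv.Perm (Fin n))
    (hπ : ∀ i, Even ((π i : ℕ) + 1) ↔ Even ((i : ℕ) + 1)) :
    rename π (Dpoly n) = (Equiv.Perm.sign π : MvPolynomial (Fin n) ℝ) * Dpoly n := by
  rw [rename_eq_bind₁, bind₁_Dpoly, Dpoly_eq_sum_det_vandermonde, mul_sum]
  set e := Equiv.arrowCongr π (Equiv.refl Bool)
  refine Fintype.sum_equiv e _ _ fun ε => ?_
  have hV : (Matrix.vandermonde fun i => C (sgn (ε i)) * X (π i)) =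
      (Matrix.vandermonde fun i => C (sgn (e ε i)) * X i).submatrix π id := by
    ext i j
    simp [e, Matrix.vandermonde]
  have hθ : evenSign (e ε) = evenSign ε :=
    (prod_equiv π (by simp [hπ]) (by simp [e])).symm
  simp only [Function.comp_apply]
  rw [hV, Matrix.det_permute, hθ]
  ring

lemma bind₁_update_neg_self_Dpoly {n : ℕ} (c : Fin n) :
    bind₁ (Function.update X c (-X c)) (Dpoly n) =
      C (if Even ((c : ℕ) + 1) then -1 else 1) * Dpoly n := by
  have hsigns : (fun i => C (sgn (Function.update (fun _ => true) c false i)) * X i) =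
      Function.update (X : Fin n → MvPolynomial (Fin n) ℝ) c (-X c) := by
    funext i
    rcases eq_or_ne i c with rfl | hic <;> simp [sgn, *]
  rw [← hsigns, bind₁_signs_Dpoly, evenSign_update_false]

lemma bind₁_update_X_Dpoly {n : ℕ} {a c : Fin n} (hac : a ≠ c)
    (hpar : Even ((a : ℕ) + 1) ↔ Even ((c : ℕ) + 1)) :
    bind₁ (Function.update X a (X c)) (Dpoly n) = 0 := by
  have hswap : ∀ i, Even ((Equiv.swap a c i : ℕ) + 1) ↔ Even ((i : ℕ) + 1) := fun i => by
    rcases eq_or_ne i a with rfl | hia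
    · simp [hpar]
    rcases eq_or_ne i c with rfl | hic
    · simp [hpar]
    · rw [Equiv.swap_apply_of_ne_of_ne hia hic]
  refine bind₁_eq_zero_of_bind₁_eq_neg (φ := X ∘ Equiv.swap a c) ?_ fun i => ?_
  · rw [← rename_eq_bind₁, rename_Dpoly _ hswap, Equiv.Perm.sign_swap hac]
    simp
  · rcases eq_or_ne i a with rfl | hia
    · simp [Function.update_of_ne hac.symm]
    rcases eq_or_ne i c with rfl | hic
    · simp [hia]
    · simp [Equiv.swap_apply_of_ne_of_ne hia hic]

lemma bind₁_update_neg_X_Dpoly {n : ℕ} {a c : Fin n} (hac : a ≠ c)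
    (hpar : Even ((a : ℕ) + 1) ↔ Even ((c : ℕ) + 1)) :
    bind₁ (Function.update X a (-X c)) (Dpoly n) = 0 := by
  set ψ := Function.update (X : Fin n → MvPolynomial (Fin n) ℝ) c (-X c)
  -- `σₐ ↦ -σ_c` is `σₐ ↦ σ_c` conjugated by `ψ`, and `ψ` only rescales `D`.
  have hconj : Function.update X a (-X c) =
      fun i => bind₁ ψ (bind₁ (Function.update X a (X c)) (ψ i)) := by
    funext i
    rcases eq_or_ne i a with rfl | hia
    · simp [ψ, hac]
    rcases eq_or_ne i c with rfl | hic
    · simp [ψ, hac.symm]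
    · simp [ψ, hia, hic]
  rw [hconj, ← bind₁_bind₁, ← bind₁_bind₁, bind₁_update_neg_self_Dpoly, map_mul,
    bind₁_update_X_Dpoly hac hpar, mul_zero, map_zero]

lemma bind₁_update_zero_Dpoly {n : ℕ} {a : Fin n} (ha : Even ((a : ℕ) + 1)) :
    bind₁ (Function.update X a 0) (Dpoly n) = 0 := by
  refine bind₁_eq_zero_of_bind₁_eq_neg (φ := Function.update X a (-X a)) ?_ fun i => ?_
  · simp [bind₁_update_neg_self_Dpoly, ha]
  · rcases eq_or_ne i a with rfl | hia <;> simp [*]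

theorem Dpoly_divisibility (n : ℕ) (hn : 2 ≤ n) :
    (∀ j : ℕ, (h : j + 2 < n) →
        (X (⟨j, by omega⟩ : Fin n) ^ 2 - X (⟨j + 2, h⟩ : Fin n) ^ 2) ∣ Dpoly n) ∧
      X (⟨1, by omega⟩ : Fin n) ∣ Dpoly n := by
  refine ⟨fun j h => ?_, ?_⟩
  · have hac : (⟨j, by omega⟩ : Fin n) ≠ ⟨j + 2, h⟩ := by simp [Fin.ext_iff]
    have hpar : Even (j + 1) ↔ Even (j + 2 + 1) := by simp [parity_simps]
    exact X_sq_sub_X_sq_dvd_of_bind₁_update_eq_zero hac (bind₁_update_X_Dpoly hac hpar)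
      (bind₁_update_neg_X_Dpoly hac hpar)
  · simpa using X_sub_dvd_of_bind₁_update_eq_zero
      (bind₁_update_zero_Dpoly (a := ⟨1, by omega⟩) even_two)
end

section
/- Let S = diag(s₁,...,s_m) be a real diagonal matrix, u, v ∈ ℝᵐ, and set rⱼ = √(uⱼ² + vⱼ²). Then the (2m)×(2m+1) block matrix M₁ = [[u, S, 0], [v, 0, S]] and the matrix M₂ = [[0, S, 0], [r, 0, S]] have the same singular values. -/
/-!
Write `(uⱼ, vⱼ) = rⱼ (sin θⱼ, cos θⱼ)` and let `G` rotate each coordinate plane `(j, m + j)`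
by `θⱼ`. Then `G` sends the first column `(0, r)` of `M₂` to `(u, v)` and commutes with
`diag(S, S)`, so `M₁ = G M₂ diag(1, Gᵀ)`. Both factors are orthogonal, hence `M₁M₁ᵀ = G M₂M₂ᵀ Gᵀ`
and `M₂M₂ᵀ` have the same characteristic polynomial.
-/

open Matrix

/-- The `(2m)×(2m+1)` block matrix `M₁ = [[u, S, 0], [v, 0, S]]`, where
`S = diag(s₁,…,s_m)`. -/
def borderedBlock {m : ℕ} (u v s : Fin m → ℝ) :
    Matrix (Fin m ⊕ Fin m) (Unit ⊕ (Fin m ⊕ Fin m)) ℝ :=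
  Matrix.of fun i j =>
    match i, j with
    | Sum.inl i, Sum.inl _ => u i
    | Sum.inl i, Sum.inr (Sum.inl j) => if i = j then s i else 0
    | Sum.inl _, Sum.inr (Sum.inr _) => 0
    | Sum.inr i, Sum.inl _ => v i
    | Sum.inr _, Sum.inr (Sum.inl _) => 0
    | Sum.inr i, Sum.inr (Sum.inr j) => if i = j then s i else 0

namespace Matrix

variable {m n R : Type*} [Fintype m] [Fintype n] [DecidableEq m] [DecidableEq n] [CommRing R]

theorem charpoly_mul_transpose_eq_of_eq_mul_mul {A B : Matrix m n R} {G : Matrix m m R}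
    {H : Matrix n n R} (hG : Gᵀ * G = 1) (hH : H * Hᵀ = 1) (hAB : A = G * B * H) :
    (A * Aᵀ).charpoly = (B * Bᵀ).charpoly := by
  subst hAB
  calc (G * B * H * (G * B * H)ᵀ).charpoly = (G * (B * Bᵀ * Gᵀ)).charpoly := by
        simp only [transpose_mul, Matrix.mul_assoc]
        rw [← Matrix.mul_assoc H, hH, Matrix.one_mul]
    _ = (B * Bᵀ * (Gᵀ * G)).charpoly := by rw [charpoly_mul_comm, Matrix.mul_assoc]
    _ = (B * Bᵀ).charpoly := by rw [hG, Matrix.mul_one]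

end Matrix

theorem Real.exists_sin_cos_mul_sqrt (x y : ℝ) :
    ∃ θ : ℝ, Real.sin θ * √(x ^ 2 + y ^ 2) = x ∧ Real.cos θ * √(x ^ 2 + y ^ 2) = y := by
  refine ⟨Complex.arg ⟨y, x⟩, ?_, ?_⟩ <;>
    rw [mul_comm, add_comm, ← Complex.norm_eq_sqrt_sq_add_sq ⟨y, x⟩]
  · exact Complex.norm_mul_sin_arg _
  · exact Complex.norm_mul_cos_arg _

section pairRotation

variable {ι : Type*} [DecidableEq ι]

noncomputable def pairRotation (θ : ι → ℝ) : Matrix (ι ⊕ ι) (ι ⊕ ι) ℝ :=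
  fromBlocks (diagonal fun j => Real.cos (θ j)) (diagonal fun j => Real.sin (θ j))
    (-diagonal fun j => Real.sin (θ j)) (diagonal fun j => Real.cos (θ j))

variable [Fintype ι] (θ : ι → ℝ)

theorem pairRotation_transpose_mul_self : (pairRotation θ)ᵀ * pairRotation θ = 1 := by
  simp only [pairRotation, fromBlocks_transpose, fromBlocks_multiply, diagonal_transpose,
    diagonal_neg, diagonal_mul_diagonal]
  simp [mul_comm, ← sq, ← fromBlocks_one]

theorem pairRotation_mulVec_sumElim_zero (r : ι → ℝ) :
    pairRotation θ *ᵥ Sum.elim 0 r =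
      Sum.elim (fun j => Real.sin (θ j) * r j) (fun j => Real.cos (θ j) * r j) := by
  ext (j | j) <;> simp [pairRotation, fromBlocks_mulVec, mulVec_diagonal]

theorem pairRotation_commute_diagonal_sumElim (d : ι → ℝ) :
    Commute (pairRotation θ) (diagonal (Sum.elim d d)) := by
  simp [Commute, SemiconjBy, pairRotation, ← fromBlocks_diagonal, fromBlocks_multiply, mul_comm]

end pairRotation

theorem borderedBlock_eq_fromCols {m : ℕ} (u v s : Fin m → ℝ) :
    borderedBlock u v s =
      fromCols (replicateCol Unit (Sum.elim u v)) (diagonal (Sum.elim s s)) := by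
  ext (i | i) (_ | j | j) <;> simp [borderedBlock, diagonal_apply]

theorem borderedBlock_sin_cos_eq_pairRotation_mul {m : ℕ} (θ r s : Fin m → ℝ) :
    borderedBlock (fun j => Real.sin (θ j) * r j) (fun j => Real.cos (θ j) * r j) s =
      pairRotation θ * borderedBlock 0 r s *
        fromBlocks (1 : Matrix Unit Unit ℝ) 0 0 (pairRotation θ)ᵀ := by
  have hG : pairRotation θ * (pairRotation θ)ᵀ = 1 :=
    mul_eq_one_comm.mp (pairRotation_transpose_mul_self θ)
  have hD :
      pairRotation θ * diagonal (Sum.elim s s) * (pairRotation θ)ᵀ = diagonal (Sum.elim s s) := by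
    rw [(pairRotation_commute_diagonal_sumElim θ s).eq, Matrix.mul_assoc, hG, Matrix.mul_one]
  rw [borderedBlock_eq_fromCols, borderedBlock_eq_fromCols, mul_fromCols, fromCols_mul_fromBlocks,
    hD, ← replicateCol_mulVec, pairRotation_mulVec_sumElim_zero]
  simp

/-- The matrices `M₁ = [[u, S, 0], [v, 0, S]]` and `M₂ = [[0, S, 0], [r, 0, S]]`,
with `rⱼ = √(uⱼ² + vⱼ²)`, have the same singular values: the characteristic
polynomials of `M₁M₁ᵀ` and `M₂M₂ᵀ` coincide. -/
theorem borderedBlock_same_singular_values {m : ℕ} (u v s : Fin m → ℝ) :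
    (borderedBlock u v s * (borderedBlock u v s)ᵀ).charpoly =
      (borderedBlock (fun _ => 0) (fun j => Real.sqrt (u j ^ 2 + v j ^ 2)) s *
        (borderedBlock (fun _ => 0) (fun j => Real.sqrt (u j ^ 2 + v j ^ 2)) s)ᵀ).charpoly := by
  choose θ hu hv using fun j => Real.exists_sin_cos_mul_sqrt (u j) (v j)
  have hM := borderedBlock_sin_cos_eq_pairRotation_mul θ (fun j => √(u j ^ 2 + v j ^ 2)) s
  simp only [hu, hv] at hM
  refine charpoly_mul_transpose_eq_of_eq_mul_mul (pairRotation_transpose_mul_self θ) ?_ hM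
  simp [fromBlocks_transpose, fromBlocks_multiply, pairRotation_transpose_mul_self]
end

section
/- Let s₁ > s₂ > ... > s_m̂ ≥ 0 and t₁ > s₁ > t₂ > s₂ > ... > t_m̂ > s_m̂ be strictly interlacing real numbers. Then the unique positive solution r ∈ ℝ_{>0}^m̂ of the secular equations ∑_{k=1}^{m̂} r_k²/(t_j² − s_k²) = 1 for j = 1,...,m̂ is given explicitly by r_j² = −ω_t(s_j²)/ω_s'(s_j²), where ω_s(ξ) = ∏_k (ξ − s_k²) and ω_t(ξ) = ∏_k (ξ − t_k²). -/
/-!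
With `ω_a = ∏ (X - a_k)`, `ω_b = ∏ (X - b_k)` and `S = ∑ w_k ∏_{l ≠ k} (X - a_l)`, the
polynomial `F = ω_b - ω_a + S` has degree `< m`, since `ω_a` and `ω_b` are both monic of degree
`m`. Away from the poles `S = ω_a · ∑ w_k / (X - a_k)`, so the secular equations say exactly that
`F` vanishes at the `m` distinct points `b_j`; and `S(a_j) = w_j ω_a'(a_j)`, so the explicit formula
says exactly that `F` vanishes at the `m` distinct points `a_j`. Both are therefore equivalent to
`F = 0`. Interlacing makes the `2m` points `a_j = s_j²` and `b_j = t_j²` pairwise distinct.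
-/

open Finset Polynomial Lagrange

namespace Polynomial

theorem eq_zero_iff_forall_eval_eq_zero_of_degree_lt_card {R ι : Type*} [CommRing R]
    [IsDomain R] [Fintype ι] {v : ι → R} (hv : Function.Injective v) {p : R[X]}
    (hp : p.degree < Fintype.card ι) :
    p = 0 ↔ ∀ i, p.eval (v i) = 0 :=
  ⟨fun h i => by rw [h, eval_zero], fun h =>
    eq_zero_of_degree_lt_of_eval_index_eq_zero univ hv.injOn hp fun i _ => h i⟩

end Polynomial

section Secular

variable {K ι : Type*} [Field K] [Fintype ι]

theorem degree_nodal_sub_nodal_lt (a b : ι → K) :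
    (nodal univ b - nodal univ a).degree < Fintype.card ι := by
  have h := degree_sub_lt_left (p := nodal univ b) (q := nodal univ a)
    (by rw [degree_nodal, degree_nodal]) nodal_ne_zero
    (by rw [nodal_monic.leadingCoeff, nodal_monic.leadingCoeff])
  rwa [degree_nodal, card_univ] at h

variable [DecidableEq ι]

noncomputable def secularNumerator (a w : ι → K) : K[X] :=
  ∑ k, w k • nodal (univ.erase k) a

variable {a b : ι → K}

theorem degree_secularNumerator_lt (w : ι → K) :
    (secularNumerator a w).degree < Fintype.card ι := by
  refine (degree_sum_le _ _).trans_lt ((Finset.sup_lt_iff (WithBot.bot_lt_coe _)).2 fun k _ => ?_)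
  calc (w k • nodal (univ.erase k) a).degree ≤ (nodal (univ.erase k) a).degree := degree_smul_le _ _
    _ < Fintype.card ι := by
      rw [degree_nodal]
      exact_mod_cast card_erase_lt_of_mem (mem_univ k)

theorem secular_sum_mul_eval_nodal {x : K} (hx : ∀ k, x ≠ a k) (w : ι → K) :
    (∑ k, w k / (x - a k)) * (nodal univ a).eval x = (secularNumerator a w).eval x := by
  rw [secularNumerator, eval_finsetSum, sum_mul]
  refine sum_congr rfl fun k _ => ?_
  rw [nodal_eq_mul_nodal_erase (mem_univ k), eval_smul, eval_mul, smul_eq_mul]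
  simp only [eval_sub, eval_X, eval_C]
  field_simp [sub_ne_zero.2 (hx k)]

theorem eval_secularNumerator_at_node (w : ι → K) (j : ι) :
    (secularNumerator a w).eval (a j) = w j * (nodal univ a).derivative.eval (a j) := by
  rw [eval_nodal_derivative_eval_node_eq (mem_univ j), secularNumerator, eval_finsetSum,
    sum_eq_single j (fun k _ hkj => ?_) (fun h => (h (mem_univ j)).elim), eval_smul, smul_eq_mul]
  rw [eval_smul, eval_nodal_at_node (mem_erase.2 ⟨Ne.symm hkj, mem_univ j⟩), smul_zero]

theorem eval_derivative_nodal_at_node_ne_zero (ha : Function.Injective a) (j : ι) :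
    (nodal univ a).derivative.eval (a j) ≠ 0 := by
  rw [eval_nodal_derivative_eval_node_eq (mem_univ j)]
  exact eval_nodal_not_at_node fun k hk => ha.ne (mem_erase.1 hk).1.symm

theorem secular_iff (ha : Function.Injective a) (hb : Function.Injective b)
    (hab : ∀ j k, b j ≠ a k) (w : ι → K) :
    (∀ j, ∑ k, w k / (b j - a k) = 1) ↔
      ∀ j, w j = -(nodal univ b).eval (a j) / (nodal univ a).derivative.eval (a j) := by
  set F := nodal univ b - nodal univ a + secularNumerator a w
  have hF : F.degree < Fintype.card ι :=
    (degree_add_le _ _).trans_lt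
      (max_lt (degree_nodal_sub_nodal_lt a b) (degree_secularNumerator_lt w))
  have at_b (j : ι) : F.eval (b j) = 0 ↔ ∑ k, w k / (b j - a k) = 1 := by
    have hω : (nodal univ a).eval (b j) ≠ 0 := eval_nodal_not_at_node fun k _ => hab j k
    rw [eval_add, eval_sub, eval_nodal_at_node (mem_univ j), ← secular_sum_mul_eval_nodal (hab j)]
    constructor <;> intro h
    · exact mul_right_cancel₀ hω (by linear_combination h)
    · rw [h]; ring
  have at_a (j : ι) : F.eval (a j) = 0 ↔
      w j = -(nodal univ b).eval (a j) / (nodal univ a).derivative.eval (a j) := by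
    rw [eq_div_iff (eval_derivative_nodal_at_node_ne_zero ha j), eval_add, eval_sub,
      eval_nodal_at_node (mem_univ j), eval_secularNumerator_at_node]
    constructor <;> intro h <;> linear_combination h
  simp only [← at_b, ← at_a, ← eq_zero_iff_forall_eval_eq_zero_of_degree_lt_card hb hF,
    ← eq_zero_iff_forall_eval_eq_zero_of_degree_lt_card ha hF]

end Secular

section Interlacing

variable {m : ℕ} {α : Type*} [Preorder α] {s t : Fin m → α}

theorem lt_of_interlace (hs : StrictAnti s)
    (hst : ∀ i : Fin m, (h : (i : ℕ) + 1 < m) → t ⟨(i : ℕ) + 1, h⟩ < s i)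
    {i j : Fin m} (hij : i < j) : t j < s i := by
  have hij' : (i : ℕ) < j := hij
  let k : Fin m := ⟨j - 1, by omega⟩
  have hk : (k : ℕ) + 1 < m := by simp only [k]; omega
  calc t j = t ⟨k + 1, hk⟩ := congrArg t (Fin.ext (by simp only [k]; omega))
    _ < s k := hst k hk
    _ ≤ s i := hs.antitone (Fin.le_def.2 (by simp only [k]; omega))

theorem strictAnti_of_interlace (hs : StrictAnti s) (hts : ∀ i, s i < t i)
    (hst : ∀ i : Fin m, (h : (i : ℕ) + 1 < m) → t ⟨(i : ℕ) + 1, h⟩ < s i) : StrictAnti t :=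
  fun i _ hij => (lt_of_interlace hs hst hij).trans (hts i)

theorem ne_of_interlace (hs : StrictAnti s) (hts : ∀ i, s i < t i)
    (hst : ∀ i : Fin m, (h : (i : ℕ) + 1 < m) → t ⟨(i : ℕ) + 1, h⟩ < s i) (j k : Fin m) :
    t j ≠ s k := by
  rcases lt_or_ge k j with hkj | hjk
  · exact (lt_of_interlace hs hst hkj).ne
  · exact ((hs.antitone hjk).trans_lt (hts j)).ne'

end Interlacing

theorem secular_solution_general (mh : ℕ) (s t : Fin mh → ℝ)
    (hs_dec : ∀ i j : Fin mh, i < j → s j < s i)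
    (hs_nonneg : ∀ i, 0 ≤ s i)
    (hts : ∀ i, s i < t i)
    (hst : ∀ i : Fin mh, (h : (i : ℕ) + 1 < mh) → t ⟨(i : ℕ) + 1, h⟩ < s i)
    (r : Fin mh → ℝ) :
    (∀ j, ∑ k, r k ^ 2 / (t j ^ 2 - s k ^ 2) = 1) ↔
      (∀ j, r j ^ 2 =
        -(∏ k, (s j ^ 2 - t k ^ 2)) /
          deriv (fun ξ : ℝ => ∏ k, (ξ - s k ^ 2)) (s j ^ 2)) := by
  have hs : StrictAnti s := fun i j => hs_dec i j
  have ht_nonneg (i : Fin mh) : 0 ≤ t i := (hs_nonneg i).trans (hts i).le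
  have sq_injective {u : Fin mh → ℝ} (hu : StrictAnti u) (hu0 : ∀ i, 0 ≤ u i) :
      Function.Injective (fun i => u i ^ 2) := fun i j h =>
    hu.injective ((sq_eq_sq₀ (hu0 i) (hu0 j)).1 h)
  have key := secular_iff (sq_injective hs hs_nonneg)
    (sq_injective (strictAnti_of_interlace hs hts hst) ht_nonneg)
    (fun j k h => ne_of_interlace hs hts hst j k ((sq_eq_sq₀ (ht_nonneg j) (hs_nonneg k)).1 h))
    (fun k => r k ^ 2)
  have hω : (fun ξ : ℝ => ∏ k, (ξ - s k ^ 2)) = fun ξ => (nodal univ fun k => s k ^ 2).eval ξ :=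
    funext fun ξ => eval_nodal.symm
  simpa only [hω, Polynomial.deriv, eval_nodal] using key

theorem secular_solution (mh : ℕ) (s t : Fin mh → ℝ)
    (hs_dec : ∀ i j : Fin mh, i < j → s j < s i)
    (hs_nonneg : ∀ i, 0 ≤ s i)
    (hts : ∀ i, s i < t i)
    (hst : ∀ i : Fin mh, (h : (i : ℕ) + 1 < mh) → t ⟨(i : ℕ) + 1, h⟩ < s i)
    (r : Fin mh → ℝ) (hr : ∀ j, 0 < r j) :
    (∀ j, ∑ k, r k ^ 2 / (t j ^ 2 - s k ^ 2) = 1) ↔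
      (∀ j, r j ^ 2 =
        -(∏ k, (s j ^ 2 - t k ^ 2)) /
          deriv (fun ξ : ℝ => ∏ k, (ξ - s k ^ 2)) (s j ^ 2)) :=
  secular_solution_general mh s t hs_dec hs_nonneg hts hst r
end

section
/- Let τ₁,...,τ_{2m−1} be independent random variables with τ_k ~ χ_k, and let τ_{2m} be independent of these with arbitrary distribution. Define the m×(m+1) bidiagonal matrix B with diagonal entries τ_{2m}, τ_{2m−2}, ..., τ₂ and superdiagonal entries τ_{2m−1}, τ_{2m−3}, ..., τ₁. Then the almost surely unique positive solution ξ₂,...,ξ_{2m−1}, ξ_{2m+1} of the system ξ_{2k+1}² + ξ_{2k−2}² = τ_{2k}² + τ_{2k−1}² (k = 1,...,m, with ξ₀ = 0) and ξ_{2k+1}ξ_{2k} = τ_{2k+1}τ_{2k} (k = 1,...,m−1) yields variables ξ₂,...,ξ_{2m−1} that are mutually independent, distributed as χ₂,...,χ_{2m−1}, and independent of τ_{2m}; moreover ξ_{2m+1} = √(ξ₁² + τ_{2m}²) where ξ₁ = √(τ_{2m−1}² − ξ_{2m−2}²) is distributed as χ₁ and independent of ξ₂,...,ξ_{2m−1}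 and of τ_{2m}. -/
/-!
One step of the RQ elimination replaces three coordinates `(c, b, d)` (the current `ξ₁`,
`τ_{2k}`, `τ_{2k+1}`) by `(d c / r, d b / r, r)` with `r = √(b² + c²)`, namely the new `ξ₁`,
`ξ_{2k}`, `ξ_{2k+1}`, and leaves the others alone. If `c ~ χ₁`, `b ~ χ_{2k}`, `d ~ χ_{2k+1}` are
independent, the image has the same joint law. On squares, `(c², b²) ↦ (c² + b², c² / (c² + b²))`
splits the pair `Γ(1/2) ⊗ Γ(k)` into an independent total `Γ(k + 1/2)` and a `Beta` ratio, and since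
`d² ~ Γ(k + 1/2)` as well, exchanging `d²` with the total does not change the law. By induction,
every stage of the elimination has the law of `(τ₁, …, τ_{2m})`, a product measure, and the last
stage is `(ξ₁, ξ₂, …, ξ_{2m-1}, τ_{2m})`.
-/

open MeasureTheory ProbabilityTheory

/-- The chi distribution with `k` degrees of freedom: the law of the square root
of a chi-squared (gamma with shape `k/2`, rate `1/2`) random variable. -/
noncomputable def chiMeasure (k : ℕ) : Measure ℝ :=
  (gammaMeasure ((k : ℝ) / 2) (1 / 2)).map Real.sqrt

open Real Set
open scoped ENNReal

def updateTriple {ι α : Type*} [DecidableEq ι] (i j k : ι) (F : α × α × α → α × α × α)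
    (v : ι → α) : ι → α :=
  Function.update (Function.update (Function.update v i (F (v i, v j, v k)).1) j
    (F (v i, v j, v k)).2.1) k (F (v i, v j, v k)).2.2

namespace MeasureTheory

lemma lintegral_eq_ofReal_abs_mul_lintegral_comp_mul {f : ℝ → ℝ≥0∞} (hf : Measurable f) {s : ℝ}
    (hs : s ≠ 0) : ∫⁻ x, f x = ENNReal.ofReal |s| * ∫⁻ u, f (s * u) := by
  conv_lhs => rw [← Real.smul_map_volume_mul_left hs]
  rw [lintegral_smul_measure, lintegral_map hf (measurable_const_mul s), smul_eq_mul]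

theorem measurePreserving_extend_comp {ι κ α : Type*} [Fintype ι] [Fintype κ] [MeasurableSpace α]
    {μ : ι → Measure α} [∀ i, SigmaFinite (μ i)] {e : κ → ι} (he : Function.Injective e)
    {G : (κ → α) → (κ → α)} (hG : MeasurePreserving G (Measure.pi (μ ∘ e)) (Measure.pi (μ ∘ e))) :
    MeasurePreserving (fun v => Function.extend e (G (v ∘ e)) v) (Measure.pi μ) (Measure.pi μ) := by
  classical
  -- the instance used by `piEquivPiSubtypeProd`, not `Set.fintypeRange`
  let _ : Fintype (Set.range e) := Subtype.fintype _
  set c := MeasurableEquiv.piCongrLeft (fun _ : Set.range e => α) (Equiv.ofInjective e he)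
  have hc : MeasurePreserving c (Measure.pi (μ ∘ e)) (Measure.pi fun i : Set.range e => μ i) :=
    measurePreserving_piCongrLeft (fun i : Set.range e => μ i) (Equiv.ofInjective e he)
  have hE := measurePreserving_piEquivPiSubtypeProd μ (· ∈ Set.range e)
  convert hE.symm.comp (((hc.comp (hG.comp hc.symm)).prod (.id _)).comp hE) using 1
  funext v i
  by_cases hi : i ∈ Set.range e
  · obtain ⟨k, rfl⟩ := hi
    simp only [Function.comp_apply, he.extend_apply, MeasurableEquiv.piEquivPiSubtypeProd_apply,
      Prod.map_apply, id_eq, MeasurableEquiv.piEquivPiSubtypeProd_symm_apply, mem_range,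
      exists_apply_eq_apply, ↓reduceDIte]
    change _ = c (G (c.symm fun x => v x)) (Equiv.ofInjective e he k)
    simp only [c, MeasurableEquiv.coe_piCongrLeft, Equiv.piCongrLeft_apply_apply]
    rfl
  · simp only [Function.extend_apply' _ _ _ (by simpa using hi), Function.comp_apply,
      MeasurableEquiv.piEquivPiSubtypeProd_apply, Prod.map_apply, id_eq,
      MeasurableEquiv.piEquivPiSubtypeProd_symm_apply, mem_range, right_eq_dite_iff,
      forall_exists_index]
    exact fun k hk => (hi ⟨k, hk⟩).elim

@[simps]
def MeasurableEquiv.finThreeArrow (α : Type*) [MeasurableSpace α] : (Fin 3 → α) ≃ᵐ α × α × α where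
  toFun v := (v 0, v 1, v 2)
  invFun p := ![p.1, p.2.1, p.2.2]
  left_inv v := by ext l; fin_cases l <;> rfl
  right_inv _ := rfl
  measurable_toFun := by
    change Measurable fun v : Fin 3 → α => (v 0, v 1, v 2)
    fun_prop
  measurable_invFun := by
    refine measurable_pi_lambda _ fun l => ?_
    fin_cases l
    exacts [measurable_fst, measurable_snd.fst, measurable_snd.snd]

theorem measurePreserving_finThreeArrow {α : Type*} [MeasurableSpace α] (μ : Fin 3 → Measure α)
    [∀ i, SigmaFinite (μ i)] :
    MeasurePreserving (MeasurableEquiv.finThreeArrow α) (Measure.pi μ)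
      ((μ 0).prod ((μ 1).prod (μ 2))) :=
  ((MeasurePreserving.id _).prod (measurePreserving_piFinTwo _)).comp
    (measurePreserving_piFinSuccAbove μ 0)

theorem measurePreserving_updateTriple {ι α : Type*} [Fintype ι] [DecidableEq ι] [MeasurableSpace α]
    {μ : ι → Measure α} [∀ i, SigmaFinite (μ i)] {i j k : ι} (hij : i ≠ j) (hik : i ≠ k)
    (hjk : j ≠ k) {F : α × α × α → α × α × α}
    (hF : MeasurePreserving F ((μ i).prod ((μ j).prod (μ k))) ((μ i).prod ((μ j).prod (μ k)))) :
    MeasurePreserving (updateTriple i j k F) (Measure.pi μ) (Measure.pi μ) := by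
  have he : Function.Injective ![i, j, k] := by
    intro a b h; fin_cases a <;> fin_cases b <;> simp_all [eq_comm]
  have (l : Fin 3) : SigmaFinite ((μ ∘ ![i, j, k]) l) := inferInstanceAs (SigmaFinite (μ _))
  have hE := measurePreserving_finThreeArrow (μ ∘ ![i, j, k])
  convert measurePreserving_extend_comp he (hE.symm.comp (hF.comp hE)) using 1
  funext v l
  by_cases hl : ∃ m, ![i, j, k] m = l
  · obtain ⟨m, rfl⟩ := hl
    rw [he.extend_apply]
    fin_cases m <;> simp [updateTriple, hij, hik, hjk]
  · have hi : l ≠ i := fun h => hl ⟨0, h.symm⟩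
    have hj : l ≠ j := fun h => hl ⟨1, h.symm⟩
    have hk : l ≠ k := fun h => hl ⟨2, h.symm⟩
    rw [Function.extend_apply' _ _ _ hl]
    simp [updateTriple, hi, hj, hk]

end MeasureTheory

namespace ProbabilityTheory

theorem iIndepFun_of_map_eq_pi {Ω ι β : Type*} [MeasurableSpace Ω] [MeasurableSpace β] [Fintype ι]
    {μ : Measure Ω} [IsProbabilityMeasure μ] {f : ι → Ω → β} (hf : ∀ i, Measurable (f i))
    {ν : ι → Measure β} [∀ i, IsProbabilityMeasure (ν i)]
    (h : μ.map (fun ω i => f i ω) = Measure.pi ν) :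
    iIndepFun f μ ∧ ∀ i, μ.map (f i) = ν i := by
  classical
  have hmarg (i : ι) : μ.map (f i) = ν i := by
    rw [show f i = Function.eval i ∘ fun ω j => f j ω from rfl,
      ← Measure.map_map (measurable_pi_apply i) (measurable_pi_lambda _ hf), h, Measure.pi_map_eval]
    simp
  refine ⟨(iIndepFun_iff_map_fun_eq_pi_map fun i => (hf i).aemeasurable).2 ?_, hmarg⟩
  simp_rw [h, hmarg]


@[fun_prop]
lemma measurable_gammaPDF (a r : ℝ) : Measurable (gammaPDF a r) :=
  (measurable_gammaPDFReal a r).ennreal_ofReal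

@[fun_prop]
lemma measurable_betaPDF (a b : ℝ) : Measurable (betaPDF a b) :=
  (measurable_betaPDFReal a b).ennreal_ofReal

lemma gammaMeasure_Iic_zero (a r : ℝ) : gammaMeasure a r (Iic 0) = 0 := by
  rw [gammaMeasure, withDensity_apply _ measurableSet_Iic,
    lintegral_Iic_eq_lintegral_Iio_add_Icc _ le_rfl, lintegral_gammaPDF_of_nonpos le_rfl, zero_add]
  exact setLIntegral_measure_zero _ _ (by simp)

lemma ae_pos_gammaMeasure (a r : ℝ) : ∀ᵐ x ∂gammaMeasure a r, 0 < x := by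
  rw [ae_iff]
  exact measure_mono_null (fun x hx => not_lt.mp hx) (gammaMeasure_Iic_zero a r)

-- `s` is the Jacobian of `(s, u) ↦ (s u, s (1 - u))`.
lemma ofReal_mul_gammaPDF_mul_gammaPDF {a b r s u : ℝ} (ha : 0 < a) (hb : 0 < b) (hr : 0 < r)
    (hs : 0 < s) (hu0 : u ≠ 0) (hu1 : u ≠ 1) :
    ENNReal.ofReal s * (gammaPDF a r (s * u) * gammaPDF b r (s - s * u)) =
      gammaPDF (a + b) r s * betaPDF a b u := by
  rcases hu0.lt_or_gt with hu | hu
  · rw [gammaPDF_of_neg (mul_neg_of_pos_of_neg hs hu), betaPDF_eq_zero_of_nonpos hu.le]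
    simp
  rcases hu1.symm.lt_or_gt with hu' | hu'
  · rw [gammaPDF_of_neg (x := s - s * u) (by nlinarith), betaPDF_eq_zero_of_one_le hu'.le]
    simp
  have h1u : 0 < 1 - u := by linarith
  rw [gammaPDF_of_nonneg (by positivity), gammaPDF_of_nonneg (by nlinarith),
    gammaPDF_of_nonneg hs.le, betaPDF_of_pos_lt_one hu hu', ← ENNReal.ofReal_mul (by positivity),
    ← ENNReal.ofReal_mul (by positivity), ← ENNReal.ofReal_mul (by positivity)]
  congr 1
  have hGa := Real.Gamma_pos_of_pos ha
  have hGb := Real.Gamma_pos_of_pos hb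
  have hGab := Real.Gamma_pos_of_pos (add_pos ha hb)
  rw [show s - s * u = s * (1 - u) by ring, Real.mul_rpow hs.le hu.le,
    Real.mul_rpow hs.le h1u.le, Real.rpow_add hr,
    show a + b - 1 = (a - 1) + (b - 1) + 1 by ring, Real.rpow_add hs, Real.rpow_add hs,
    Real.rpow_one, beta]
  field_simp
  rw [← Real.exp_add]
  ring_nf

theorem measurePreserving_add_div_gammaMeasure {a b r : ℝ} (ha : 0 < a) (hb : 0 < b) (hr : 0 < r) :
    MeasurePreserving (fun p : ℝ × ℝ => (p.1 + p.2, p.1 / (p.1 + p.2)))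
      ((gammaMeasure a r).prod (gammaMeasure b r))
      ((gammaMeasure (a + b) r).prod (betaMeasure a b)) := by
  have := isProbabilityMeasure_gammaMeasure (add_pos ha hb) hr
  have := isProbabilityMeasureBeta ha hb
  have hT : Measurable fun p : ℝ × ℝ => (p.1 + p.2, p.1 / (p.1 + p.2)) := by fun_prop
  refine ⟨hT, (Measure.prod_eq fun A B hA hB => ?_).symm⟩
  set C := ∫⁻ u, B.indicator (betaPDF a b) u with hC
  set g : ℝ → ℝ → ℝ≥0∞ := fun x s =>
    gammaPDF a r x * gammaPDF b r (s - x) * (A.indicator 1 s * B.indicator 1 (x / s)) with hg_def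
  have hg : Measurable (Function.uncurry g) := by
    simp only [hg_def]
    fun_prop (disch := assumption)
  have h_inner : ∀ s, s ≠ 0 → ∫⁻ x, g x s = A.indicator (gammaPDF (a + b) r) s * C := by
    intro s hs
    rcases hs.lt_or_gt with hs | hs
    · have hg0 : ∀ x, g x s = 0 := fun x => by
        rcases lt_or_ge x 0 with hx | hx
        · simp [hg_def, gammaPDF_of_neg hx]
        · simp [hg_def, gammaPDF_of_neg (x := s - x) (by linarith)]
      simp [hg0, gammaPDF_of_neg hs]
    have hgs : Measurable fun x => g x s := hg.comp (measurable_id.prodMk measurable_const)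
    rw [lintegral_eq_ofReal_abs_mul_lintegral_comp_mul hgs hs.ne', abs_of_pos hs,
      ← lintegral_const_mul' _ _ ENNReal.ofReal_ne_top, hC,
      ← lintegral_const_mul _ ((measurable_betaPDF a b).indicator hB)]
    refine lintegral_congr_ae ?_
    filter_upwards [Measure.ae_ne volume 0, Measure.ae_ne volume 1] with u hu0 hu1
    simp only [hg_def, mul_div_cancel_left₀ _ hs.ne', ← mul_assoc,
      ofReal_mul_gammaPDF_mul_gammaPDF ha hb hr hs hu0 hu1]
    by_cases hsA : s ∈ A <;> by_cases huB : u ∈ B <;> simp [hsA, huB, mul_comm]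
  calc ((gammaMeasure a r).prod (gammaMeasure b r)).map
          (fun p : ℝ × ℝ => (p.1 + p.2, p.1 / (p.1 + p.2))) (A ×ˢ B)
        = ∫⁻ x, ∫⁻ s, g x s := by
          have hS := hT (hA.prod hB)
          rw [Measure.map_apply hT (hA.prod hB), gammaMeasure, gammaMeasure,
            prod_withDensity (measurable_gammaPDF a r) (measurable_gammaPDF b r),
            withDensity_apply _ hS, ← lintegral_indicator hS,
            lintegral_prod _ ((Measurable.indicator (by fun_prop) hS).aemeasurable)]
          refine lintegral_congr fun x => ?_
          rw [← lintegral_sub_right_eq_self _ x]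
          refine lintegral_congr fun s => ?_
          by_cases hsA : s ∈ A <;> by_cases hB : x / s ∈ B <;> simp [hg_def, hsA, hB, indicator]
    _ = ∫⁻ s, ∫⁻ x, g x s := lintegral_lintegral_swap hg.aemeasurable
    _ = ∫⁻ s, A.indicator (gammaPDF (a + b) r) s * C := by
          refine lintegral_congr_ae ?_
          filter_upwards [Measure.ae_ne volume 0] with s hs using h_inner s hs
    _ = gammaMeasure (a + b) r A * betaMeasure a b B := by
          rw [lintegral_mul_const _ ((measurable_gammaPDF _ r).indicator hA),
            lintegral_indicator hA, gammaMeasure, betaMeasure, withDensity_apply _ hA,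
            withDensity_apply _ hB, ← lintegral_indicator hB]

theorem measurePreserving_mul_one_sub_betaMeasure {a b r : ℝ} (ha : 0 < a) (hb : 0 < b)
    (hr : 0 < r) :
    MeasurePreserving (fun p : ℝ × ℝ => (p.1 * p.2, p.1 * (1 - p.2)))
      ((gammaMeasure (a + b) r).prod (betaMeasure a b))
      ((gammaMeasure a r).prod (gammaMeasure b r)) := by
  have := isProbabilityMeasure_gammaMeasure ha hr
  have := isProbabilityMeasure_gammaMeasure hb hr
  have hT := measurePreserving_add_div_gammaMeasure ha hb hr
  refine ⟨by fun_prop, ?_⟩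
  rw [← hT.map_eq, Measure.map_map (by fun_prop) hT.measurable]
  convert Measure.map_id using 1
  refine Measure.map_congr ?_
  filter_upwards [Measure.quasiMeasurePreserving_fst.ae (ae_pos_gammaMeasure a r),
    Measure.quasiMeasurePreserving_snd.ae (ae_pos_gammaMeasure b r)] with p hx hy
  have : p.1 + p.2 ≠ 0 := by positivity
  simp only [Function.comp_apply, id]
  ext
  · field_simp
  · field_simp
    ring

/-- `(x + y, x / (x + y))` splits `Γ(a) ⊗ Γ(b)` into independent `Γ(a + b)` and `Beta(a, b)`
parts; the total is then exchanged with `z`, which has the same law. -/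
theorem measurePreserving_gammaMeasure_exchange_sum {a b r : ℝ} (ha : 0 < a) (hb : 0 < b)
    (hr : 0 < r) :
    MeasurePreserving
      (fun p : ℝ × ℝ × ℝ =>
        (p.2.2 * (p.1 / (p.1 + p.2.1)), p.2.2 * (1 - p.1 / (p.1 + p.2.1)), p.1 + p.2.1))
      ((gammaMeasure a r).prod ((gammaMeasure b r).prod (gammaMeasure (a + b) r)))
      ((gammaMeasure a r).prod ((gammaMeasure b r).prod (gammaMeasure (a + b) r))) := by
  have := isProbabilityMeasure_gammaMeasure ha hr
  have := isProbabilityMeasure_gammaMeasure hb hr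
  have := isProbabilityMeasure_gammaMeasure (add_pos ha hb) hr
  have := isProbabilityMeasureBeta ha hb
  set γa := gammaMeasure a r
  set γb := gammaMeasure b r
  set γab := gammaMeasure (a + b) r
  set β := betaMeasure a b
  have hT := (measurePreserving_add_div_gammaMeasure ha hb hr).prod (MeasurePreserving.id γab)
  have hU := (measurePreserving_mul_one_sub_betaMeasure ha hb hr).prod (MeasurePreserving.id γab)
  have hswap := (Measure.measurePreserving_swap (μ := β) (ν := γab)).prod (MeasurePreserving.id γab)
  exact (measurePreserving_prodAssoc γa γb γab).comp <| hU.comp <| hswap.comp <|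
    Measure.measurePreserving_swap.comp <| (measurePreserving_prodAssoc γab β γab).comp <|
    hT.comp (measurePreserving_prodAssoc γa γb γab).symm

end ProbabilityTheory

/-- In one step of the RQ-decomposition, the orthogonal reflection sending `(c, b)` to `(0, r)`,
`r = √(b² + c²)`, sends `(0, d)` to `(d c / r, d b / r)`. -/
noncomputable def rqRotation (p : ℝ × ℝ × ℝ) : ℝ × ℝ × ℝ :=
  (p.2.2 * p.1 / √(p.2.1 ^ 2 + p.1 ^ 2), p.2.2 * p.2.1 / √(p.2.1 ^ 2 + p.1 ^ 2),
    √(p.2.1 ^ 2 + p.1 ^ 2))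

theorem measurePreserving_rqRotation {k : ℕ} (hk : 1 ≤ k) :
    MeasurePreserving rqRotation
      ((chiMeasure 1).prod ((chiMeasure k).prod (chiMeasure (k + 1))))
      ((chiMeasure 1).prod ((chiMeasure k).prod (chiMeasure (k + 1)))) := by
  have hk' : (0 : ℝ) < k / 2 := by positivity
  have := isProbabilityMeasure_gammaMeasure one_half_pos one_half_pos
  have := isProbabilityMeasure_gammaMeasure hk' one_half_pos
  have := isProbabilityMeasure_gammaMeasure (add_pos one_half_pos hk') one_half_pos
  set Γ := (gammaMeasure (1 / 2) (1 / 2)).prod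
    ((gammaMeasure ((k : ℝ) / 2) (1 / 2)).prod (gammaMeasure (1 / 2 + (k : ℝ) / 2) (1 / 2)))
  have hG := measurePreserving_gammaMeasure_exchange_sum one_half_pos hk' one_half_pos
  set sqrt3 : ℝ × ℝ × ℝ → ℝ × ℝ × ℝ := Prod.map Real.sqrt (Prod.map Real.sqrt Real.sqrt)
  have hchi : (chiMeasure 1).prod ((chiMeasure k).prod (chiMeasure (k + 1))) = Γ.map sqrt3 := by
    rw [← Measure.map_prod_map _ _ (by fun_prop) (by fun_prop),
      ← Measure.map_prod_map _ _ (by fun_prop) (by fun_prop), chiMeasure, chiMeasure, chiMeasure]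
    congr 4 <;> push_cast <;> ring
  have hconj : rqRotation ∘ sqrt3 =ᵐ[Γ] sqrt3 ∘ fun p : ℝ × ℝ × ℝ =>
      (p.2.2 * (p.1 / (p.1 + p.2.1)), p.2.2 * (1 - p.1 / (p.1 + p.2.1)), p.1 + p.2.1) := by
    filter_upwards [Measure.quasiMeasurePreserving_fst.ae (ae_pos_gammaMeasure _ _),
      Measure.quasiMeasurePreserving_snd.ae
        (Measure.quasiMeasurePreserving_fst.ae (ae_pos_gammaMeasure _ _)),
      Measure.quasiMeasurePreserving_snd.ae
        (Measure.quasiMeasurePreserving_snd.ae (ae_pos_gammaMeasure _ _))]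
      with ⟨x, y, z⟩ (hx : 0 < x) (hy : 0 < y) (hz : 0 < z)
    have hxy : 0 < x + y := by positivity
    have hsq : √y ^ 2 + √x ^ 2 = x + y := by rw [sq_sqrt hy.le, sq_sqrt hx.le, add_comm]
    have h1 : 1 - x / (x + y) = y / (x + y) := by field_simp; ring
    simp only [Function.comp_apply, sqrt3, Prod.map, rqRotation, hsq, h1]
    rw [sqrt_mul hz.le, sqrt_mul hz.le, sqrt_div hx.le, sqrt_div hy.le, mul_div_assoc,
      mul_div_assoc]
  refine ⟨by unfold rqRotation; fun_prop, ?_⟩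
  rw [hchi, Measure.map_map (by unfold rqRotation; fun_prop) (by fun_prop), Measure.map_congr hconj,
    ← Measure.map_map (by fun_prop) hG.measurable, hG.map_eq]

structure IsRQSolution (m : ℕ) (t x : ℕ → ℝ) : Prop where
  t_pos : ∀ k, 1 ≤ k → k ≤ 2 * m → 0 < t k
  x_zero : x 0 = 0
  x_pos : ∀ k, 2 ≤ k → k ≤ 2 * m - 1 ∨ k = 2 * m + 1 → 0 < x k
  sum_sq : ∀ k, 1 ≤ k → k ≤ m →
    x (2 * k + 1) ^ 2 + x (2 * k - 2) ^ 2 = t (2 * k) ^ 2 + t (2 * k - 1) ^ 2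
  mul_eq : ∀ k, 1 ≤ k → k ≤ m - 1 → x (2 * k + 1) * x (2 * k) = t (2 * k + 1) * t (2 * k)
  x_one : x 1 = √(t (2 * m - 1) ^ 2 - x (2 * m - 2) ^ 2)

/-- The paper's `ξ₁` after `n` steps; `rqRem t x (m - 1)` is the `ξ₁` of the theorem. -/
noncomputable def rqRem (t x : ℕ → ℝ) (n : ℕ) : ℝ := √(t (2 * n + 1) ^ 2 - x (2 * n) ^ 2)

/-- The vector `(rqRem t x n, x 2, …, x (2n+1), t (2n+2), …, t (2m))` after `n` steps. -/
noncomputable def rqStage (m n : ℕ) (t x : ℕ → ℝ) (i : Fin (2 * m)) : ℝ :=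
  if (i : ℕ) = 0 then rqRem t x n else if (i : ℕ) ≤ 2 * n then x (i + 1) else t (i + 1)

namespace IsRQSolution

variable {m : ℕ} {t x : ℕ → ℝ} (h : IsRQSolution m t x)
include h

lemma sum_sq' {n : ℕ} (hn : n < m) :
    x (2 * n + 3) ^ 2 + x (2 * n) ^ 2 = t (2 * n + 2) ^ 2 + t (2 * n + 1) ^ 2 := by
  simpa [mul_add, add_assoc] using h.sum_sq (n + 1) (by omega) hn

lemma mul_eq' {n : ℕ} (hn : n + 1 < m) :
    x (2 * n + 3) * x (2 * n + 2) = t (2 * n + 3) * t (2 * n + 2) := by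
  simpa [mul_add, add_assoc] using h.mul_eq (n + 1) (by omega) (by omega)

/-- Interlacing: the radicand of `rqRem` is positive, so `√` never returns its junk value. -/
lemma sq_lt {n : ℕ} (hn : n < m) : x (2 * n) ^ 2 < t (2 * n + 1) ^ 2 := by
  induction n with
  | zero => simpa [h.x_zero] using pow_pos (h.t_pos 1 le_rfl (by omega)) 2
  | succ n ih =>
    have hgt : t (2 * n + 2) ^ 2 < x (2 * n + 3) ^ 2 := by
      linarith [h.sum_sq' (n := n) (by omega), ih (by omega)]
    have ht := h.t_pos (2 * n + 3) (by omega) (by omega)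
    have key : x (2 * n + 2) ^ 2 * x (2 * n + 3) ^ 2 < t (2 * n + 3) ^ 2 * x (2 * n + 3) ^ 2 :=
      calc x (2 * n + 2) ^ 2 * x (2 * n + 3) ^ 2 = t (2 * n + 3) ^ 2 * t (2 * n + 2) ^ 2 := by
            rw [← mul_pow, ← mul_pow, mul_comm, h.mul_eq' hn]
        _ < t (2 * n + 3) ^ 2 * x (2 * n + 3) ^ 2 := by gcongr
    exact lt_of_mul_lt_mul_right key (sq_nonneg _)

lemma rqRem_sq {n : ℕ} (hn : n < m) : rqRem t x n ^ 2 = t (2 * n + 1) ^ 2 - x (2 * n) ^ 2 :=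
  sq_sqrt (by linarith [h.sq_lt hn])

lemma x_odd_eq {n : ℕ} (hn : n < m) : x (2 * n + 3) = √(t (2 * n + 2) ^ 2 + rqRem t x n ^ 2) := by
  have hpos : 0 < x (2 * n + 3) := by
    rcases Nat.lt_or_ge (n + 1) m with hn' | hn'
    · exact h.x_pos _ (by omega) (.inl (by omega))
    · exact h.x_pos _ (by omega) (.inr (by omega))
  rw [h.rqRem_sq hn, ← sqrt_sq hpos.le]
  congr 1
  linarith [h.sum_sq' hn]

lemma rqRotation_eq {n : ℕ} (hn : n + 1 < m) :
    rqRotation (rqRem t x n, t (2 * n + 2), t (2 * n + 3)) =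
      (rqRem t x (n + 1), x (2 * n + 2), x (2 * n + 3)) := by
  have hx3 := h.x_pos (2 * n + 3) (by omega) (.inl (by omega))
  have ht3 := h.t_pos (2 * n + 3) (by omega) (by omega)
  have hrem : 0 ≤ rqRem t x n := sqrt_nonneg _
  have hsq : x (2 * n + 3) ^ 2 = t (2 * n + 2) ^ 2 + rqRem t x n ^ 2 := by
    rw [h.x_odd_eq (by omega : n < m), sq_sqrt (by positivity)]
  have hmul := h.mul_eq' hn
  have h1 : t (2 * n + 3) * rqRem t x n / x (2 * n + 3) = rqRem t x (n + 1) := by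
    rw [← sqrt_sq (by positivity : 0 ≤ t (2 * n + 3) * rqRem t x n / x (2 * n + 3))]
    show _ = √(t (2 * n + 3) ^ 2 - x (2 * n + 2) ^ 2)
    congr 1
    field_simp
    linear_combination (-t (2 * n + 3) ^ 2) * hsq +
      (x (2 * n + 3) * x (2 * n + 2) + t (2 * n + 3) * t (2 * n + 2)) * hmul
  have h2 : t (2 * n + 3) * t (2 * n + 2) / x (2 * n + 3) = x (2 * n + 2) := by
    field_simp
    linarith
  simp only [rqRotation, ← h.x_odd_eq (by omega : n < m), h1, h2]

lemma rqStage_zero : rqStage m 0 t x = fun i : Fin (2 * m) => t (i + 1) := by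
  funext i
  have : rqRem t x 0 = t 1 := by
    have := i.isLt
    simp [rqRem, h.x_zero, sqrt_sq (h.t_pos 1 le_rfl (by omega)).le]
  unfold rqStage
  split_ifs with h0 <;> simp_all

lemma rqStage_succ {n : ℕ} (hn : n + 1 < m) :
    rqStage m (n + 1) t x = updateTriple ⟨0, by omega⟩ ⟨2 * n + 1, by omega⟩ ⟨2 * n + 2, by omega⟩
      rqRotation (rqStage m n t x) := by
  have htriple : (rqStage m n t x ⟨0, by omega⟩, rqStage m n t x ⟨2 * n + 1, by omega⟩,
      rqStage m n t x ⟨2 * n + 2, by omega⟩) = (rqRem t x n, t (2 * n + 2), t (2 * n + 3)) := by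
    simp [rqStage]
  funext l
  simp only [updateTriple, htriple, h.rqRotation_eq hn, Function.update_apply, Fin.ext_iff]
  unfold rqStage
  split_ifs <;> first | rfl | omega | (congr 1; omega)

lemma rqRem_pred (hm : 1 ≤ m) : rqRem t x (m - 1) = x 1 := by
  rw [h.x_one, rqRem, show 2 * (m - 1) + 1 = 2 * m - 1 by omega,
    show 2 * (m - 1) = 2 * m - 2 by omega]

lemma x_last_eq (hm : 1 ≤ m) : x (2 * m + 1) = √(x 1 ^ 2 + t (2 * m) ^ 2) := by
  have := h.x_odd_eq (n := m - 1) (by omega)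
  rwa [h.rqRem_pred hm, show 2 * (m - 1) + 3 = 2 * m + 1 by omega,
    show 2 * (m - 1) + 2 = 2 * m by omega, add_comm (t (2 * m) ^ 2)] at this

lemma rqStage_pred (hm : 1 ≤ m) : rqStage m (m - 1) t x =
    fun i : Fin (2 * m) => if (i : ℕ) + 1 ≤ 2 * m - 1 then x (i + 1) else t (2 * m) := by
  funext i
  have := i.isLt
  unfold rqStage
  split_ifs <;> first | omega | (congr 1; omega) | simp_all [h.rqRem_pred hm]

end IsRQSolution

lemma measurable_rqStage {Ω : Type*} [MeasurableSpace Ω] {τ ξ : ℕ → Ω → ℝ}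
    (hτ : ∀ k, Measurable (τ k)) (hξ : ∀ k, Measurable (ξ k)) (m n : ℕ) :
    Measurable fun ω => rqStage m n (τ · ω) (ξ · ω) := by
  refine measurable_pi_lambda _ fun i => ?_
  unfold rqStage rqRem
  split_ifs <;> fun_prop

theorem map_rqStage_eq_pi {Ω : Type*} [MeasurableSpace Ω] {μ : Measure Ω} [IsProbabilityMeasure μ]
    {m : ℕ} {τ ξ : ℕ → Ω → ℝ} (hτmeas : ∀ k, Measurable (τ k)) (hξmeas : ∀ k, Measurable (ξ k))
    (hτindep : iIndepFun (fun i : Fin (2 * m) => τ ((i : ℕ) + 1)) μ)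
    (hτdist : ∀ k, 1 ≤ k → k ≤ 2 * m - 1 → μ.map (τ k) = chiMeasure k)
    (hsol : ∀ ω, IsRQSolution m (τ · ω) (ξ · ω)) {n : ℕ} (hn : n < m) :
    μ.map (fun ω => rqStage m n (τ · ω) (ξ · ω)) =
      Measure.pi fun i : Fin (2 * m) => μ.map (τ (i + 1)) := by
  have _ (i : Fin (2 * m)) : IsProbabilityMeasure (μ.map (τ (i + 1))) :=
    Measure.isProbabilityMeasure_map (hτmeas _).aemeasurable
  induction n with
  | zero =>
    simp_rw [fun ω => (hsol ω).rqStage_zero]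
    exact hτindep.map_fun_eq_pi_map fun i => (hτmeas _).aemeasurable
  | succ n ih =>
    have hF : MeasurePreserving rqRotation
        ((μ.map (τ 1)).prod ((μ.map (τ (2 * n + 2))).prod (μ.map (τ (2 * n + 3)))))
        ((μ.map (τ 1)).prod ((μ.map (τ (2 * n + 2))).prod (μ.map (τ (2 * n + 3))))) := by
      rw [hτdist 1 le_rfl (by omega), hτdist (2 * n + 2) (by omega) (by omega),
        hτdist (2 * n + 3) (by omega) (by omega)]
      exact measurePreserving_rqRotation (by omega)
    have hU := measurePreserving_updateTriple (μ := fun i : Fin (2 * m) => μ.map (τ (i + 1)))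
      (i := ⟨0, by omega⟩) (j := ⟨2 * n + 1, by omega⟩) (k := ⟨2 * n + 2, by omega⟩)
      (by simp) (by simp) (by simp) hF
    have hstep : (fun ω => rqStage m (n + 1) (τ · ω) (ξ · ω)) =
        updateTriple _ _ _ rqRotation ∘ fun ω => rqStage m n (τ · ω) (ξ · ω) :=
      funext fun ω => (hsol ω).rqStage_succ hn
    rw [hstep, ← Measure.map_map hU.measurable (measurable_rqStage hτmeas hξmeas m n),
      ih (by omega), hU.map_eq]

/-- The RQ-construction: if `τ₁,…,τ_{2m-1}` are independent with `τ_k ~ χ_k` and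
`τ_{2m}` is independent of these (with arbitrary distribution), and
`ξ₂,…,ξ_{2m-1}, ξ_{2m+1}` is the positive solution of the system
`ξ_{2k+1}² + ξ_{2k-2}² = τ_{2k}² + τ_{2k-1}²` (`k = 1,…,m`, `ξ₀ = 0`) and
`ξ_{2k+1} ξ_{2k} = τ_{2k+1} τ_{2k}` (`k = 1,…,m-1`), with
`ξ₁ = √(τ_{2m-1}² - ξ_{2m-2}²)`, then `ξ₁, ξ₂, …, ξ_{2m-1}, τ_{2m}` are mutually
independent, `ξ_k ~ χ_k`, and `ξ_{2m+1} = √(ξ₁² + τ_{2m}²)`. -/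
theorem rq_construction_chi
    {Ω : Type*} [MeasureSpace Ω] (μ : Measure Ω) [IsProbabilityMeasure μ]
    (m : ℕ) (hm : 1 ≤ m) (τ ξ : ℕ → Ω → ℝ)
    (hτmeas : ∀ k, Measurable (τ k)) (hξmeas : ∀ k, Measurable (ξ k))
    (hτindep : iIndepFun
      (fun i : Fin (2 * m) => τ ((i : ℕ) + 1)) μ)
    (hτdist : ∀ k, 1 ≤ k → k ≤ 2 * m - 1 → μ.map (τ k) = chiMeasure k)
    (hτpos : ∀ k, 1 ≤ k → k ≤ 2 * m → ∀ ω, 0 < τ k ω)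
    (hξ0 : ∀ ω, ξ 0 ω = 0)
    (hξpos : ∀ k, 2 ≤ k → k ≤ 2 * m - 1 ∨ k = 2 * m + 1 → ∀ ω, 0 < ξ k ω)
    (heq1 : ∀ k, 1 ≤ k → k ≤ m → ∀ ω,
      ξ (2 * k + 1) ω ^ 2 + ξ (2 * k - 2) ω ^ 2 =
        τ (2 * k) ω ^ 2 + τ (2 * k - 1) ω ^ 2)
    (heq2 : ∀ k, 1 ≤ k → k ≤ m - 1 → ∀ ω,
      ξ (2 * k + 1) ω * ξ (2 * k) ω = τ (2 * k + 1) ω * τ (2 * k) ω)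
    (hξ1 : ∀ ω, ξ 1 ω = Real.sqrt (τ (2 * m - 1) ω ^ 2 - ξ (2 * m - 2) ω ^ 2)) :
    iIndepFun
        (fun i : Fin (2 * m) =>
          if (i : ℕ) + 1 ≤ 2 * m - 1 then ξ ((i : ℕ) + 1) else τ (2 * m)) μ ∧
      (∀ k, 1 ≤ k → k ≤ 2 * m - 1 → μ.map (ξ k) = chiMeasure k) ∧
      ∀ ω, ξ (2 * m + 1) ω = Real.sqrt (ξ 1 ω ^ 2 + τ (2 * m) ω ^ 2) := by
  have hsol (ω : Ω) : IsRQSolution m (τ · ω) (ξ · ω) :=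
    ⟨fun k h1 h2 => hτpos k h1 h2 ω, hξ0 ω, fun k h1 h2 => hξpos k h1 h2 ω,
      fun k h1 h2 => heq1 k h1 h2 ω, fun k h1 h2 => heq2 k h1 h2 ω, hξ1 ω⟩
  have _ (i : Fin (2 * m)) : IsProbabilityMeasure (μ.map (τ (i + 1))) :=
    Measure.isProbabilityMeasure_map (hτmeas _).aemeasurable
  have hlaw := map_rqStage_eq_pi hτmeas hξmeas hτindep hτdist hsol (n := m - 1) (by omega)
  simp_rw [fun ω => (hsol ω).rqStage_pred hm] at hlaw
  obtain ⟨hindep, hmarg⟩ := iIndepFun_of_map_eq_pi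
    (f := fun i : Fin (2 * m) => if (i : ℕ) + 1 ≤ 2 * m - 1 then ξ (i + 1) else τ (2 * m))
    (fun i => by split_ifs <;> fun_prop) (by simpa only [ite_apply] using hlaw)
  refine ⟨hindep, fun k hk1 hk2 => ?_, fun ω => (hsol ω).x_last_eq hm⟩
  obtain ⟨i, rfl⟩ : ∃ i : Fin (2 * m), (i : ℕ) + 1 = k := ⟨⟨k - 1, by omega⟩, by simp; omega⟩
  simpa [hk2, hτdist _ hk1 hk2] using hmarg i
end
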